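/- arXiv:math/0212013 — 5 statements merged into one kernel-verified Lean document; each statement's English description precedes it below -/
import Mathlib

section
/- Let d ≥ 1 and let X be a subset of the Euclidean space ℝ^d, equipped with the induced metric. Let g ≥ 0, α ≥ 0, C > 1 and 0 < ε₀ < 1. Assume: (i) 0 < H^g(X) < ∞; (ii) for every ε > 0 and all x, y ∈ X there is a bijective isometry from X ∩ B(x,ε) onto X ∩ B(y,ε), where B(x,ε) denotes the open ball of radius ε; (iii) for every ε with 0 < ε < ε₀ there exists a finite 2ε-separated subset of X of cardinality strictly greater than C·ε^{−α}. Then for every Borel set E ⊆ X and every countable cover (θ_j)_{j∈ℕ} of E by sets with diam θ_j ≤ ε₀ for all j, one has Σ_j (diam θ_j)^α ≥ C · H^g(E) / H^g(X). -/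
/-!
Fix a piece `S ⊆ X` of diameter `r ≤ ε₀` and a point `x ∈ S`. For small `δ > 0`, the ball
`X ∩ B(t, r + δ)` around each point `t` of a `2(r - δ)`-separated set `T ⊆ X` contains an
isometric copy of `S ⊆ X ∩ B(x, r + δ)`, so `#T · H^g(S)` is at most `H^g(X)` plus the measure of
the pairwise overlaps. Two such balls meet in a lens of radius `√(4rδ)`, and the disjoint-balls
case of the same count gives `H^g(X ∩ B(w, s)) ≤ H^g(X) s^α`, so with a fixed number
`N > C r^{-α}` of centres the overlaps vanish as `δ → 0`. Hence `C r^{-α} H^g(S) ≤ H^g(X)`, and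
summing over the pieces `E ∩ θ_j` gives the claim.
-/

open MeasureTheory Metric Set Filter Topology
open scoped ENNReal

theorem ENNReal.le_of_eventually_le_add_mul_rpow {a b c : ℝ≥0∞} {α : ℝ} (hα : 0 < α)
    (hc : c ≠ ∞) (h : ∀ᶠ s in 𝓝[>] (0 : ℝ), a ≤ b + c * ENNReal.ofReal (s ^ α)) : a ≤ b := by
  have hpow : Tendsto (fun s : ℝ => ENNReal.ofReal (s ^ α)) (𝓝[>] 0) (𝓝 0) := by
    have := (ENNReal.continuous_ofReal.comp (Real.continuous_rpow_const hα.le)).tendsto 0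
    simpa [Function.comp_def, Real.zero_rpow hα.ne'] using this.mono_left nhdsWithin_le_nhds
  have hlim := tendsto_const_nhds (x := b).add (ENNReal.Tendsto.const_mul hpow (Or.inr hc))
  rw [mul_zero, add_zero] at hlim
  exact ge_of_tendsto hlim h

theorem ENNReal.ofReal_mul_le_mul_rpow {a b : ℝ≥0∞} {c r α : ℝ} {n : ℕ} (hr : 0 < r)
    (hn : c * r ^ (-α) ≤ n) (h : n * a ≤ b) :
    ENNReal.ofReal c * a ≤ b * ENNReal.ofReal (r ^ α) := by
  have hc : c = c * r ^ (-α) * r ^ α := by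
    rw [mul_assoc, ← Real.rpow_add hr, neg_add_cancel, Real.rpow_zero, mul_one]
  calc ENNReal.ofReal c * a
      = ENNReal.ofReal (c * r ^ (-α)) * a * ENNReal.ofReal (r ^ α) := by
        rw [mul_right_comm, ← ENNReal.ofReal_mul' (by positivity), ← hc]
    _ ≤ n * a * ENNReal.ofReal (r ^ α) := by
        gcongr
        simpa using ENNReal.ofReal_le_ofReal hn
    _ ≤ b * ENNReal.ofReal (r ^ α) := by gcongr

theorem MeasureTheory.sum_measure_le_measure_biUnion_add {Ω ι : Type*} [MeasurableSpace Ω]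
    [DecidableEq ι] (μ : Measure Ω) (T : Finset ι) {B : ι → Set Ω}
    (hB : ∀ i ∈ T, MeasurableSet (B i)) :
    ∑ i ∈ T, μ (B i) ≤ μ (⋃ i ∈ T, B i) + ∑ i ∈ T, ∑ j ∈ T.erase i, μ (B i ∩ B j) := by
  set D : ι → Set Ω := fun i => B i \ ⋃ j ∈ T.erase i, B j
  have hD : (T : Set ι).PairwiseDisjoint D := by
    intro i _ j hj hij
    refine disjoint_left.2 fun z hzi hzj => hzi.2 ?_
    exact mem_biUnion (Finset.mem_erase.2 ⟨hij.symm, hj⟩) hzj.1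
  have hDm : ∀ i ∈ T, MeasurableSet (D i) := fun i hi =>
    (hB i hi).diff <| Finset.measurableSet_biUnion _ fun j hj => hB j (Finset.mem_of_mem_erase hj)
  calc ∑ i ∈ T, μ (B i) ≤ ∑ i ∈ T, (μ (D i) + ∑ j ∈ T.erase i, μ (B i ∩ B j)) := by
        gcongr with i
        calc μ (B i) ≤ μ (D i ∪ ⋃ j ∈ T.erase i, B i ∩ B j) := by
              refine measure_mono fun z hz => ?_
              by_cases hz' : z ∈ ⋃ j ∈ T.erase i, B j
              · right
                simp only [mem_iUnion] at hz' ⊢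
                obtain ⟨j, hj, hzj⟩ := hz'
                exact ⟨j, hj, hz, hzj⟩
              · exact Or.inl ⟨hz, hz'⟩
          _ ≤ μ (D i) + ∑ j ∈ T.erase i, μ (B i ∩ B j) :=
              (measure_union_le _ _).trans (add_le_add_right (measure_biUnion_finset_le _ _) _)
    _ = μ (⋃ i ∈ T, D i) + ∑ i ∈ T, ∑ j ∈ T.erase i, μ (B i ∩ B j) := by
        rw [Finset.sum_add_distrib, measure_biUnion_finset hD hDm]
    _ ≤ μ (⋃ i ∈ T, B i) + ∑ i ∈ T, ∑ j ∈ T.erase i, μ (B i ∩ B j) := by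
        gcongr with i
        exact sdiff_subset

section MetricSpace

variable {γ : Type*} [MetricSpace γ] [MeasurableSpace γ] [BorelSpace γ]

def BallsIsometric (X : Set γ) : Prop :=
  ∀ ε : ℝ, 0 < ε → ∀ x ∈ X, ∀ y ∈ X, Nonempty ((X ∩ ball x ε : Set γ) ≃ᵢ (X ∩ ball y ε : Set γ))

def HasLargePackings (X : Set γ) (C α ε₀ : ℝ) : Prop :=
  ∀ ε : ℝ, 0 < ε → ε < ε₀ → ∃ T : Finset γ, ↑T ⊆ X ∧
    (∀ x ∈ T, ∀ y ∈ T, x ≠ y → 2 * ε ≤ dist x y) ∧ C * ε ^ (-α) < (T.card : ℝ)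

theorem IsometryEquiv.exists_subset_hausdorffMeasure_eq {A B : Set γ} (e : A ≃ᵢ B) {g : ℝ}
    (hg : 0 ≤ g) {S : Set γ} (hS : S ⊆ A) : ∃ S' ⊆ B, μH[g] S' = μH[g] S := by
  refine ⟨(↑) '' (e '' ((↑) ⁻¹' S)), by rintro _ ⟨z, -, rfl⟩; exact z.2, ?_⟩
  rw [isometry_subtype_coe.hausdorffMeasure_image (Or.inl hg), e.hausdorffMeasure_image,
    isometry_subtype_coe.hausdorffMeasure_preimage (Or.inl hg), Subtype.range_coe,
    inter_eq_left.2 hS]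

variable {X : Set γ} {g α C ε₀ : ℝ}

theorem BallsIsometric.card_mul_hausdorffMeasure_le_add [DecidableEq γ] (hX : BallsIsometric X)
    (hg : 0 ≤ g) (hXtop : μH[g] X ≠ ∞) {S : Set γ} {x : γ} {R : ℝ} (hR : 0 < R) (hx : x ∈ X)
    (hS : S ⊆ X ∩ ball x R) {T : Finset γ} (hT : ↑T ⊆ X) :
    T.card * μH[g] S ≤
      μH[g] X + ∑ t ∈ T, ∑ t' ∈ T.erase t, μH[g] (X ∩ (ball t R ∩ ball t' R)) := by
  have hcopy : ∀ t ∈ T, ∃ A ⊆ X ∩ ball t R, μH[g] A = μH[g] S := fun t ht =>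
    (hX R hR x hx t (hT ht)).some.exists_subset_hausdorffMeasure_eq hg hS
  choose! A hAX hAS using hcopy
  set X' := toMeasurable μH[g] X
  set B : γ → Set γ := fun t => toMeasurable μH[g] (A t) ∩ (X' ∩ ball t R)
  have hB : ∀ t ∈ T, MeasurableSet (B t) := fun t _ => (measurableSet_toMeasurable _ _).inter
    ((measurableSet_toMeasurable _ _).inter measurableSet_ball)
  calc T.card * μH[g] S = ∑ t ∈ T, μH[g] (A t) := by
        rw [Finset.sum_congr rfl hAS, Finset.sum_const, nsmul_eq_mul]
    _ ≤ ∑ t ∈ T, μH[g] (B t) := by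
        gcongr with t ht
        exact subset_inter (subset_toMeasurable _ _)
          (fun z hz => ⟨subset_toMeasurable _ _ (hAX t ht hz).1, (hAX t ht hz).2⟩)
    _ ≤ μH[g] (⋃ t ∈ T, B t) + ∑ t ∈ T, ∑ t' ∈ T.erase t, μH[g] (B t ∩ B t') :=
        sum_measure_le_measure_biUnion_add _ T hB
    _ ≤ μH[g] X + ∑ t ∈ T, ∑ t' ∈ T.erase t, μH[g] (X ∩ (ball t R ∩ ball t' R)) := by
        gcongr ?_ + ∑ t ∈ T, ∑ t' ∈ T.erase t, ?_ with t _ t' _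
        · rw [← measure_toMeasurable X]
          exact measure_mono (iUnion₂_subset fun t _ => inter_subset_right.trans inter_subset_left)
        · rw [← Measure.measure_toMeasurable_inter
            (measurableSet_ball.inter measurableSet_ball) hXtop]
          exact measure_mono fun z hz => ⟨hz.1.2.1, hz.1.2.2, hz.2.2.2⟩

theorem hausdorffMeasure_inter_ball_le (hg : 0 ≤ g) (hC : 1 ≤ C) (hX : BallsIsometric X)
    (hpack : HasLargePackings X C α ε₀) (hXtop : μH[g] X ≠ ∞) {w : γ} (hw : w ∈ X) {s : ℝ}
    (hs : 0 < s) (hsε₀ : s < ε₀) : μH[g] (X ∩ ball w s) ≤ μH[g] X * ENNReal.ofReal (s ^ α) := by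
  classical
  obtain ⟨T, hTX, hTsep, hTcard⟩ := hpack s hs hsε₀
  have hdisj : ∀ t ∈ T, ∀ t' ∈ T.erase t, μH[g] (X ∩ (ball t s ∩ ball t' s)) = 0 := by
    refine fun t ht t' ht' => measure_mono_null (fun z ⟨_, hzt, hzt'⟩ => ?_) measure_empty
    have := hTsep t ht t' (Finset.mem_of_mem_erase ht') (Finset.ne_of_mem_erase ht').symm
    linarith [dist_triangle_left t t' z, mem_ball.1 hzt, mem_ball.1 hzt']
  have hcard := hX.card_mul_hausdorffMeasure_le_add hg hXtop hs hw subset_rfl hTX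
  rw [Finset.sum_eq_zero fun t ht => Finset.sum_eq_zero (hdisj t ht), add_zero] at hcard
  have hone : 1 * s ^ (-α) ≤ T.card := by
    nlinarith [Real.rpow_pos_of_pos hs (-α)]
  simpa using ENNReal.ofReal_mul_le_mul_rpow hs hone hcard

end MetricSpace

section InnerProductSpace

variable {V : Type*} [NormedAddCommGroup V] [InnerProductSpace ℝ V]

theorem ball_inter_ball_subset_ball_midpoint {t t' : V} {ε R ρ : ℝ} (hε : 0 ≤ ε) (hρ : 0 ≤ ρ)
    (hsep : 2 * ε ≤ dist t t') (hR : R ^ 2 ≤ ε ^ 2 + ρ ^ 2) :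
    ball t R ∩ ball t' R ⊆ ball (midpoint ℝ t t') ρ := by
  rintro z ⟨hzt, hzt'⟩
  rw [mem_ball] at hzt hzt' ⊢
  have hApollonius :=
    EuclideanGeometry.dist_sq_add_dist_sq_eq_two_mul_dist_midpoint_sq_add_half_dist_sq z t t'
  have hzt2 : dist z t ^ 2 < R ^ 2 := pow_lt_pow_left₀ hzt dist_nonneg two_ne_zero
  have hzt'2 : dist z t' ^ 2 < R ^ 2 := pow_lt_pow_left₀ hzt' dist_nonneg two_ne_zero
  have hsep2 : ε ^ 2 ≤ (dist t t' / 2) ^ 2 := pow_le_pow_left₀ hε (by linarith) 2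
  have hsq : dist z (midpoint ℝ t t') ^ 2 < ρ ^ 2 := by linarith
  exact (pow_lt_pow_iff_left₀ dist_nonneg hρ two_ne_zero).1 hsq

variable [MeasurableSpace V] [BorelSpace V] {X : Set V} {g α C ε₀ : ℝ}

theorem hausdorffMeasure_inter_ball_inter_ball_le (hg : 0 ≤ g) (hC : 1 ≤ C)
    (hX : BallsIsometric X) (hpack : HasLargePackings X C α ε₀) (hXtop : μH[g] X ≠ ∞)
    {t t' : V} {ε R s : ℝ} (hε : 0 ≤ ε) (hsep : 2 * ε ≤ dist t t')
    (hR : R ^ 2 ≤ ε ^ 2 + (s / 2) ^ 2) (hs : 0 < s) (hsε₀ : s < ε₀) :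
    μH[g] (X ∩ (ball t R ∩ ball t' R)) ≤ μH[g] X * ENNReal.ofReal (s ^ α) := by
  set m := midpoint ℝ t t'
  have hlens : X ∩ (ball t R ∩ ball t' R) ⊆ X ∩ ball m (s / 2) :=
    inter_subset_inter_right X (ball_inter_ball_subset_ball_midpoint hε (by positivity) hsep hR)
  rcases (X ∩ ball m (s / 2)).eq_empty_or_nonempty with hempty | ⟨w, hwX, hwm⟩
  · simp [measure_mono_null hlens (hempty ▸ measure_empty)]
  calc μH[g] (X ∩ (ball t R ∩ ball t' R)) ≤ μH[g] (X ∩ ball w s) := by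
        refine measure_mono (hlens.trans fun z ⟨hzX, hzm⟩ => ⟨hzX, ?_⟩)
        rw [mem_ball] at hzm hwm ⊢
        linarith [dist_triangle_right z w m]
    _ ≤ μH[g] X * ENNReal.ofReal (s ^ α) :=
        hausdorffMeasure_inter_ball_le hg hC hX hpack hXtop hwX hs hsε₀

theorem card_mul_hausdorffMeasure_le_add_of_ediam_le (hg : 0 ≤ g) (hα : 0 ≤ α) (hC : 1 ≤ C)
    (hX : BallsIsometric X) (hpack : HasLargePackings X C α ε₀) (hXtop : μH[g] X ≠ ∞)
    {S : Set V} (hSX : S ⊆ X) {r : ℝ} (hSr : ediam S ≤ ENNReal.ofReal r) (hr : 0 < r)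
    (hrε₀ : r ≤ ε₀) {N : ℕ} (hN : (N : ℝ) ≤ C * r ^ (-α) + 1) {s : ℝ} (hs : 0 < s) (hsr : s < r) :
    N * μH[g] S ≤ μH[g] X + N * N * μH[g] X * ENNReal.ofReal (s ^ α) := by
  classical
  rcases S.eq_empty_or_nonempty with rfl | ⟨x, hx⟩
  · simp
  -- packing radius `r - δ` and copy radius `r + δ`, chosen so that the lenses have radius `s / 2`
  set δ := s ^ 2 / (16 * r)
  have hδ : 0 < δ := by positivity
  have hδr : δ < r := by
    rw [div_lt_iff₀ (by positivity)]
    nlinarith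
  obtain ⟨T, hTX, hTsep, hTcard⟩ := hpack (r - δ) (by linarith) (by linarith)
  have hNT : N ≤ T.card := by
    have hpow : r ^ (-α) ≤ (r - δ) ^ (-α) :=
      Real.rpow_le_rpow_of_nonpos (by linarith) (by linarith) (by linarith)
    have : (N : ℝ) < T.card + 1 := by nlinarith
    exact Nat.lt_succ_iff.1 (by exact_mod_cast this)
  obtain ⟨T', hT'T, rfl⟩ := Finset.exists_subset_card_eq hNT
  have hS : S ⊆ X ∩ ball x (r + δ) := fun y hy => by
    have := (edist_le_ofReal hr.le).1 ((edist_le_ediam_of_mem hy hx).trans hSr)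
    exact ⟨hSX hy, mem_ball.2 (by linarith)⟩
  refine (hX.card_mul_hausdorffMeasure_le_add hg hXtop (by linarith) (hSX hx) hS
    ((Finset.coe_subset.2 hT'T).trans hTX)).trans (add_le_add_right ?_ _)
  calc ∑ t ∈ T', ∑ t' ∈ T'.erase t, μH[g] (X ∩ (ball t (r + δ) ∩ ball t' (r + δ)))
      ≤ ∑ t ∈ T', ∑ t' ∈ T'.erase t, μH[g] X * ENNReal.ofReal (s ^ α) := by
        gcongr with t ht t' ht'
        refine hausdorffMeasure_inter_ball_inter_ball_le hg hC hX hpack hXtop (by linarith)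
          (hTsep t (hT'T ht) t' (hT'T (Finset.mem_of_mem_erase ht'))
            (Finset.ne_of_mem_erase ht').symm) ?_ hs (by linarith)
        have h16 : 16 * r * δ = s ^ 2 := by simp only [δ]; field_simp
        nlinarith
    _ ≤ ∑ t ∈ T', ∑ t' ∈ T', μH[g] X * ENNReal.ofReal (s ^ α) := by
        gcongr with t
        exact Finset.erase_subset t T'
    _ = T'.card * T'.card * μH[g] X * ENNReal.ofReal (s ^ α) := by
        simp only [Finset.sum_const, nsmul_eq_mul, mul_assoc]

theorem ofReal_mul_hausdorffMeasure_le_of_ediam_le (hg : 0 ≤ g) (hα : 0 < α) (hC : 1 ≤ C)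
    (hX : BallsIsometric X) (hpack : HasLargePackings X C α ε₀) (hXtop : μH[g] X ≠ ∞)
    {S : Set V} (hSX : S ⊆ X) {r : ℝ} (hSr : ediam S ≤ ENNReal.ofReal r) (hr : 0 < r)
    (hrε₀ : r ≤ ε₀) : ENNReal.ofReal C * μH[g] S ≤ μH[g] X * ENNReal.ofReal (r ^ α) := by
  set N := ⌊C * r ^ (-α)⌋₊ + 1
  have hCN : C * r ^ (-α) < N := by
    push_cast [N]
    exact Nat.lt_floor_add_one _
  have hN : (N : ℝ) ≤ C * r ^ (-α) + 1 := by
    push_cast [N]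
    linarith [Nat.floor_le (by positivity : 0 ≤ C * r ^ (-α))]
  have hNS : N * μH[g] S ≤ μH[g] X := by
    refine ENNReal.le_of_eventually_le_add_mul_rpow (c := N * N * μH[g] X) hα (by finiteness) ?_
    filter_upwards [Ioo_mem_nhdsGT hr] with s hs
    exact card_mul_hausdorffMeasure_le_add_of_ediam_le hg hα.le hC hX hpack hXtop hSX hSr hr hrε₀
      hN hs.1 hs.2
  exact ENNReal.ofReal_mul_le_mul_rpow hr hCN.le hNS

theorem ofReal_mul_hausdorffMeasure_le_mul_ediam_rpow (hg : 0 ≤ g) (hα : 0 < α) (hC : 1 ≤ C)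
    (hε₀ : 0 < ε₀) (hX : BallsIsometric X) (hpack : HasLargePackings X C α ε₀)
    (hXtop : μH[g] X ≠ ∞) {S : Set V} (hSX : S ⊆ X) (hSε₀ : ediam S ≤ ENNReal.ofReal ε₀) :
    ENNReal.ofReal C * μH[g] S ≤ μH[g] X * ediam S ^ α := by
  set r := (ediam S).toReal
  have hSr : ediam S = ENNReal.ofReal r :=
    (ENNReal.ofReal_toReal (ne_top_of_le_ne_top ENNReal.ofReal_ne_top hSε₀)).symm
  obtain hr | hr : 0 = r ∨ 0 < r := ENNReal.toReal_nonneg.eq_or_lt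
  · -- `S` has diameter at most every `s > 0`, so let `s → 0` in the bound at scale `s`
    rw [hSr, ← hr, ENNReal.ofReal_zero, ENNReal.zero_rpow_of_pos hα, mul_zero]
    refine ENNReal.le_of_eventually_le_add_mul_rpow hα hXtop ?_
    filter_upwards [Ioo_mem_nhdsGT hε₀] with s hs
    rw [zero_add]
    exact ofReal_mul_hausdorffMeasure_le_of_ediam_le hg hα hC hX hpack hXtop hSX
      (hSr.trans_le (ENNReal.ofReal_le_ofReal (hr ▸ hs.1.le))) hs.1 hs.2.le
  · rw [hSr, ENNReal.ofReal_rpow_of_pos hr]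
    exact ofReal_mul_hausdorffMeasure_le_of_ediam_le hg hα hC hX hpack hXtop hSX hSr.le hr
      (ENNReal.toReal_le_of_le_ofReal hε₀.le hSε₀)

end InnerProductSpace

theorem stmt0_general (d : ℕ) (X : Set (EuclideanSpace ℝ (Fin d)))
    (g α C ε₀ : ℝ) (hg : 0 ≤ g) (hα : 0 ≤ α) (hC : 1 < C) (hε₀ : 0 < ε₀)
    (hXtop : μH[g] X < ⊤)
    (hiso : ∀ ε : ℝ, 0 < ε → ∀ x ∈ X, ∀ y ∈ X,
      Nonempty ((X ∩ ball x ε : Set (EuclideanSpace ℝ (Fin d))) ≃ᵢ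
                (X ∩ ball y ε : Set (EuclideanSpace ℝ (Fin d)))))
    (hpack : ∀ ε : ℝ, 0 < ε → ε < ε₀ →
      ∃ T : Finset (EuclideanSpace ℝ (Fin d)), ↑T ⊆ X ∧
        (∀ x ∈ T, ∀ y ∈ T, x ≠ y → 2 * ε ≤ dist x y) ∧
        C * ε ^ (-α) < (T.card : ℝ))
    (E : Set (EuclideanSpace ℝ (Fin d))) (hE : E ⊆ X)
    (θ : ℕ → Set (EuclideanSpace ℝ (Fin d))) (hcover : E ⊆ ⋃ j, θ j)
    (hdiam : ∀ j, EMetric.diam (θ j) ≤ ENNReal.ofReal ε₀) :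
    ENNReal.ofReal C * (μH[g] E / μH[g] X) ≤ ∑' j, EMetric.diam (θ j) ^ α := by
  rcases hα.eq_or_lt with rfl | hα
  · simp
  have hpiece (j : ℕ) :
      ENNReal.ofReal C * μH[g] (E ∩ θ j) ≤ μH[g] X * ediam (θ j) ^ α := by
    have hdiam_le : ediam (E ∩ θ j) ≤ ediam (θ j) := ediam_mono inter_subset_right
    calc ENNReal.ofReal C * μH[g] (E ∩ θ j) ≤ μH[g] X * ediam (E ∩ θ j) ^ α :=
          ofReal_mul_hausdorffMeasure_le_mul_ediam_rpow hg hα hC.le hε₀ hiso hpack hXtop.ne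
            (inter_subset_left.trans hE) (hdiam_le.trans (hdiam j))
      _ ≤ μH[g] X * ediam (θ j) ^ α := by gcongr
  rw [← mul_div_assoc]
  refine ENNReal.div_le_of_le_mul ?_
  calc ENNReal.ofReal C * μH[g] E ≤ ENNReal.ofReal C * ∑' j, μH[g] (E ∩ θ j) := by
        gcongr
        refine (measure_mono ?_).trans (measure_iUnion_le fun j => E ∩ θ j)
        rw [← inter_iUnion]
        exact subset_inter subset_rfl hcover
    _ ≤ ∑' j, μH[g] X * ediam (θ j) ^ α := by
        rw [← ENNReal.tsum_mul_left]
        exact ENNReal.tsum_le_tsum hpiece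
    _ = (∑' j, ediam (θ j) ^ α) * μH[g] X := by rw [ENNReal.tsum_mul_left, mul_comm]

/-- Lemma 6.1 of the paper: if `X ⊆ ℝ^d` is a `g`-set all of whose `ε`-balls are
isometric and whose packing numbers satisfy `P_ε(X) > C·ε^{-α}` for `ε < ε₀`, then any
countable cover of a Borel set `E ⊆ X` by sets of diameter at most `ε₀` has `α`-Hausdorff
sum at least `C · H^g(E) / H^g(X)`. -/
theorem stmt0 (d : ℕ) (hd : 1 ≤ d) (X : Set (EuclideanSpace ℝ (Fin d)))
    (g α C ε₀ : ℝ) (hg : 0 ≤ g) (hα : 0 ≤ α) (hC : 1 < C) (hε₀ : 0 < ε₀) (hε₀1 : ε₀ < 1)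
    (hX0 : 0 < μH[g] X) (hXtop : μH[g] X < ⊤)
    (hiso : ∀ ε : ℝ, 0 < ε → ∀ x ∈ X, ∀ y ∈ X,
      Nonempty ((X ∩ ball x ε : Set (EuclideanSpace ℝ (Fin d))) ≃ᵢ
                (X ∩ ball y ε : Set (EuclideanSpace ℝ (Fin d)))))
    (hpack : ∀ ε : ℝ, 0 < ε → ε < ε₀ →
      ∃ T : Finset (EuclideanSpace ℝ (Fin d)), ↑T ⊆ X ∧
        (∀ x ∈ T, ∀ y ∈ T, x ≠ y → 2 * ε ≤ dist x y) ∧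
        C * ε ^ (-α) < (T.card : ℝ))
    (E : Set (EuclideanSpace ℝ (Fin d))) (hE : E ⊆ X) (hEborel : MeasurableSet E)
    (θ : ℕ → Set (EuclideanSpace ℝ (Fin d))) (hcover : E ⊆ ⋃ j, θ j)
    (hdiam : ∀ j, EMetric.diam (θ j) ≤ ENNReal.ofReal ε₀) :
    ENNReal.ofReal C * (μH[g] E / μH[g] X) ≤ ∑' j, EMetric.diam (θ j) ^ α :=
  stmt0_general d X g α C ε₀ hg hα hC hε₀ hXtop hiso hpack E hE θ hcover hdiam
end

section
/- Let d ≥ 1, let X be a subset of the Euclidean space ℝ^d equipped with the induced metric, let g ≥ 0 with H^g(X) < ∞, let ε > 0, and let N be a positive integer. Assume: (i) for all x, y ∈ X there is a bijective isometry from X ∩ B(x,ε) onto X ∩ B(y,ε), where B(x,ε) denotes the open ball of radius ε; (ii) there exists a 2ε-separated subset of X with N elements. Then for every x ∈ X one has H^g(X ∩ B(x,ε)) ≤ H^g(X) / N. -/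
open MeasureTheory Metric

lemma hm_eq_of_isometryEquiv {d : ℕ} (g : ℝ) (hg : 0 ≤ g)
    (s t : Set (EuclideanSpace ℝ (Fin d)))
    (e : (s : Set (EuclideanSpace ℝ (Fin d))) ≃ᵢ (t : Set (EuclideanSpace ℝ (Fin d)))) :
    μH[g] s = μH[g] t := by
  have hs : μH[g] (Subtype.val '' (Set.univ : Set s)) = μH[g] (Set.univ : Set s) :=
    isometry_subtype_coe.hausdorffMeasure_image (Or.inl hg) _
  have ht : μH[g] (Subtype.val '' (Set.univ : Set t)) = μH[g] (Set.univ : Set t) :=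
    isometry_subtype_coe.hausdorffMeasure_image (Or.inl hg) _
  have he : μH[g] (e '' (Set.univ : Set s)) = μH[g] (Set.univ : Set s) :=
    e.isometry.hausdorffMeasure_image (Or.inl hg) _
  have h1 : Subtype.val '' (Set.univ : Set s) = s := by simp
  have h2 : Subtype.val '' (Set.univ : Set t) = t := by simp
  have h3 : e '' (Set.univ : Set s) = Set.univ := by simp
  rw [h1] at hs; rw [h2] at ht; rw [h3] at he
  rw [hs, ht, he]

/-- Key step in Lemma 6.1 of the paper: if all `ε`-balls of `X ⊆ ℝ^d` are isometric
and `X` contains a `2ε`-separated set of `N` points, then each `ε`-ball of `X` carries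
at most a `1/N` fraction of the total `g`-dimensional Hausdorff measure of `X`. -/
theorem stmt1 (d : ℕ) (hd : 1 ≤ d) (X : Set (EuclideanSpace ℝ (Fin d)))
    (g : ℝ) (hg : 0 ≤ g) (hXtop : μH[g] X < ⊤) (ε : ℝ) (hε : 0 < ε)
    (N : ℕ) (hN : 0 < N)
    (hiso : ∀ x ∈ X, ∀ y ∈ X,
      Nonempty ((X ∩ ball x ε : Set (EuclideanSpace ℝ (Fin d))) ≃ᵢ
                (X ∩ ball y ε : Set (EuclideanSpace ℝ (Fin d)))))
    (hsep : ∃ T : Finset (EuclideanSpace ℝ (Fin d)), ↑T ⊆ X ∧ T.card = N ∧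
      (∀ x ∈ T, ∀ y ∈ T, x ≠ y → 2 * ε ≤ dist x y)) :
    ∀ x ∈ X, μH[g] (X ∩ ball x ε) ≤ μH[g] X / N := by
  intro x hx
  obtain ⟨T, hTX, hTcard, hTsep⟩ := hsep
  set μ := (μH[g] : Measure (EuclideanSpace ℝ (Fin d)))
  set m := μ (X ∩ ball x ε) with hm
  -- each ball around a point of T has the same measure m
  have hsame : ∀ t ∈ T, μ (X ∩ ball t ε) = m := by
    intro t ht
    exact hm_eq_of_isometryEquiv g hg _ _ (hiso t (hTX ht) x hx).some
  -- balls are pairwise disjoint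
  have hdisj : (T : Set (EuclideanSpace ℝ (Fin d))).PairwiseDisjoint
      (fun t => ball t ε) := by
    intro a ha b hb hab
    apply ball_disjoint_ball
    have := hTsep a ha b hb hab
    linarith
  have hsum : ∑ t ∈ T, μ.restrict X (ball t ε) = μ.restrict X (⋃ t ∈ T, ball t ε) :=
    (measure_biUnion_finset hdisj (fun t _ => measurableSet_ball)).symm
  have hle : μ.restrict X (⋃ t ∈ T, ball t ε) ≤ μ X := by
    calc μ.restrict X (⋃ t ∈ T, ball t ε) ≤ μ.restrict X Set.univ :=
          measure_mono (Set.subset_univ _)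
      _ = μ X := by simp
  have hterm : ∀ t ∈ T, μ.restrict X (ball t ε) = m := by
    intro t ht
    rw [Measure.restrict_apply measurableSet_ball, Set.inter_comm]
    exact hsame t ht
  have hNm : (N : ENNReal) * m ≤ μ X := by
    calc (N : ENNReal) * m = ∑ t ∈ T, μ.restrict X (ball t ε) := by
          rw [Finset.sum_congr rfl hterm, Finset.sum_const, hTcard, nsmul_eq_mul]
      _ = μ.restrict X (⋃ t ∈ T, ball t ε) := hsum
      _ ≤ μ X := hle
  rw [ENNReal.le_div_iff_mul_le (Or.inl (by exact_mod_cast hN.ne'))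
      (Or.inl (ENNReal.natCast_ne_top N))]
  rwa [mul_comm]
end

section
/- Let p ≥ 1, let n_1, …, n_p be positive integers, and let α_1, …, α_p be positive reals with α_1 + ⋯ + α_p = 1. Then for every ε with 0 < ε < 1 there exists N ∈ ℕ such that for every integer k ≥ N there exist nonnegative integers l_1, …, l_p satisfying: (i) l_1 n_1 + ⋯ + l_p n_p ≤ k; (ii) |l_i n_i / k − α_i| < ε for each i; and (iii) (k − Σ_{i=1}^p l_i n_i)² + Σ_{i=1}^p l_i² ≤ k² · Σ_{i=1}^p α_i² / n_i². -/
/-- The arithmetic core of Lemma 5.3 of the paper: given block sizes `n i` and weights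
`α i > 0` summing to `1`, for every `0 < ε < 1` and all sufficiently large `k` one can
find multiplicities `l i` with `∑ l i * n i ≤ k`, with `l i * n i / k` within `ε` of
`α i`, and with `(k - ∑ l i * n i)² + ∑ (l i)² ≤ k² · ∑ (α i)²/(n i)²`. -/
theorem stmt2 (p : ℕ) (hp : 1 ≤ p) (n : Fin p → ℕ) (hn : ∀ i, 0 < n i)
    (α : Fin p → ℝ) (hα : ∀ i, 0 < α i) (hsum : ∑ i, α i = 1)
    (ε : ℝ) (hε : 0 < ε) (hε1 : ε < 1) :
    ∃ N : ℕ, ∀ k : ℕ, N ≤ k →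
      ∃ l : Fin p → ℕ,
        (∑ i, l i * n i ≤ k) ∧
        (∀ i, |((l i : ℝ) * (n i : ℝ)) / (k : ℝ) - α i| < ε) ∧
        (((k : ℝ) - ∑ i, (l i : ℝ) * (n i : ℝ)) ^ 2 + ∑ i, (l i : ℝ) ^ 2 ≤
          (k : ℝ) ^ 2 * ∑ i, (α i) ^ 2 / (n i : ℝ) ^ 2) := by
  have hne : (Finset.univ : Finset (Fin p)).Nonempty := by
    rw [Finset.univ_nonempty_iff]
    exact Fin.pos_iff_nonempty.mp hp
  have hni : ∀ i, (0:ℝ) < (n i : ℝ) := fun i => by exact_mod_cast hn i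
  set B : ℝ := ∑ i, (n i : ℝ) with hBdef
  have hB0 : 0 < B := Finset.sum_pos (fun i _ => hni i) hne
  set M : ℝ := Finset.univ.sup' hne
    (fun i => max ((n i : ℝ)/ε) (B*(n i:ℝ)^2/(α i))) with hMdef
  refine ⟨⌈M⌉₊ + 1, fun k hk => ?_⟩
  have hkM : M < (k:ℝ) := by
    have h1 : M ≤ (⌈M⌉₊ : ℝ) := Nat.le_ceil M
    have h2 : ((⌈M⌉₊ : ℝ) + 1) ≤ (k:ℝ) := by exact_mod_cast hk
    linarith
  have hMge : ∀ i : Fin p, max ((n i : ℝ)/ε) (B*(n i:ℝ)^2/(α i)) ≤ M := by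
    intro i
    exact Finset.le_sup' (fun i => max ((n i : ℝ)/ε) (B*(n i:ℝ)^2/(α i))) (Finset.mem_univ i)
  have hk0 : (0:ℝ) < (k:ℝ) := by
    have := hMge ⟨0, hp⟩
    have h1 : (n ⟨0, hp⟩ : ℝ)/ε ≤ M := le_trans (le_max_left _ _) this
    have h2 : 0 < (n ⟨0, hp⟩ : ℝ)/ε := div_pos (hni _) hε
    linarith
  set l : Fin p → ℕ := fun i => ⌊α i * k / (n i : ℝ)⌋₊ with hldef
  have hx : ∀ i, 0 ≤ α i * k / (n i : ℝ) :=
    fun i => div_nonneg (mul_nonneg (hα i).le hk0.le) (hni i).le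
  have hle : ∀ i, (l i : ℝ) * n i ≤ α i * k := by
    intro i
    have h := Nat.floor_le (hx i)
    have := (le_div_iff₀ (hni i)).mp h
    simpa [hldef] using this
  have hlt : ∀ i, α i * k - (l i : ℝ) * n i < n i := by
    intro i
    have h := Nat.lt_floor_add_one (α i * k / (n i : ℝ))
    have := (div_lt_iff₀ (hni i)).mp h
    have h2 : α i * k < ((l i : ℝ) + 1) * n i := by
      simpa [hldef] using this
    nlinarith [hni i]
  have hd0 : ∀ i, 0 ≤ α i * k - (l i : ℝ) * n i := fun i => sub_nonneg.mpr (hle i)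
  have hsumle : ∑ i, (l i : ℝ) * n i ≤ (k : ℝ) := by
    calc ∑ i, (l i : ℝ) * n i ≤ ∑ i, α i * k :=
          Finset.sum_le_sum (fun i _ => hle i)
      _ = (k : ℝ) := by rw [← Finset.sum_mul, hsum, one_mul]
  refine ⟨l, ?_, ?_, ?_⟩
  · -- (i)
    have : ((∑ i, l i * n i : ℕ) : ℝ) ≤ (k : ℝ) := by
      push_cast
      exact hsumle
    exact_mod_cast this
  · -- (ii)
    intro i
    have h1 : (n i : ℝ)/ε ≤ M := le_trans (le_max_left _ _) (hMge i)
    have h2 : (n i : ℝ) < ε * k := by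
      have := (div_lt_iff₀ hε).mp (lt_of_le_of_lt h1 hkM)
      linarith
    have heq : (l i : ℝ) * n i / k - α i = -((α i * k - (l i : ℝ) * n i)/k) := by
      field_simp
      ring
    rw [heq, abs_neg, abs_of_nonneg (div_nonneg (hd0 i) hk0.le), div_lt_iff₀ hk0]
    have := hlt i
    linarith
  · -- (iii)
    have hkey : ∀ i, (l i : ℝ)^2 + B * (α i * k - (l i : ℝ) * n i)
        ≤ (k : ℝ)^2 * (α i ^ 2 / (n i : ℝ)^2) := by
      intro i
      have h1 : B * (n i : ℝ)^2 / α i ≤ M := le_trans (le_max_right _ _) (hMge i)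
      have h2 : B * (n i : ℝ)^2 < α i * k := by
        have := (div_lt_iff₀ (hα i)).mp (lt_of_le_of_lt h1 hkM)
        linarith
      have hm1 : (1 : ℝ) ≤ (n i : ℝ) := by exact_mod_cast hn i
      have hBm : (n i : ℝ) ≤ B := Finset.single_le_sum
        (fun j _ => (hni j).le) (Finset.mem_univ i)
      have hdn := hd0 i
      have hdlt := hlt i
      have hL0 : (0:ℝ) ≤ (l i : ℝ) := Nat.cast_nonneg _
      have hm3 : (n i : ℝ) ≤ α i * k := by
        nlinarith [mul_le_mul_of_nonneg_right hBm
          (mul_nonneg (hni i).le (hni i).le), mul_pos (hni i) (hni i)]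
      have hd2 : (α i * k - (l i : ℝ) * n i)^2
          ≤ (α i * k - (l i : ℝ) * n i) * (α i * k) := by
        nlinarith [mul_le_mul_of_nonneg_left (le_trans hdlt.le hm3) hdn]
      have hBd : B * (α i * k - (l i : ℝ) * n i) * (n i : ℝ)^2
          ≤ (α i * k) * (α i * k - (l i : ℝ) * n i) := by
        nlinarith [mul_le_mul_of_nonneg_left h2.le hdn]
      have hgoal : ((l i : ℝ) * n i)^2 + B * (α i * k - (l i : ℝ) * n i) * (n i:ℝ)^2
          ≤ (k : ℝ)^2 * α i ^2 := by
        nlinarith [hd2, hBd]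
      have hn2 : (0:ℝ) < (n i : ℝ)^2 := by positivity
      rw [div_eq_mul_inv, ← mul_assoc]
      rw [le_mul_inv_iff₀ hn2]
      calc ((l i : ℝ)^2 + B * (α i * k - (l i : ℝ) * n i)) * (n i : ℝ)^2
          = ((l i : ℝ) * n i)^2 + B * (α i * k - (l i : ℝ) * n i) * (n i:ℝ)^2 := by ring
        _ ≤ (k : ℝ)^2 * α i ^2 := hgoal
    have hDeq : (k : ℝ) - ∑ i, (l i : ℝ) * n i
        = ∑ i, (α i * k - (l i : ℝ) * n i) := by
      rw [Finset.sum_sub_distrib, ← Finset.sum_mul, hsum, one_mul]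
    set D : ℝ := ∑ i, (α i * k - (l i : ℝ) * n i) with hDdef
    have hD0 : 0 ≤ D := Finset.sum_nonneg (fun i _ => hd0 i)
    have hDB : D ≤ B := Finset.sum_le_sum (fun i _ => (hlt i).le)
    have hDsq : D^2 ≤ B * D := by
      rw [sq]; exact mul_le_mul_of_nonneg_right hDB hD0
    have hsum2 : ∑ i, ((l i : ℝ)^2 + B * (α i * k - (l i : ℝ) * n i))
        ≤ ∑ i, (k : ℝ)^2 * (α i ^ 2 / (n i : ℝ)^2) :=
      Finset.sum_le_sum (fun i _ => hkey i)
    rw [Finset.sum_add_distrib, ← Finset.mul_sum, ← hDdef] at hsum2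
    rw [← Finset.mul_sum] at hsum2
    rw [hDeq]
    clear_value D l B M
    linarith only [hsum2, hDsq]
end

section
/- Let p ≥ 1, let n_1, …, n_p be positive integers, and let α_1, …, α_p be positive reals with α_1 + ⋯ + α_p = 1. Let A = Π_{i=1}^p M_{n_i}(ℂ) (the direct product of complex matrix algebras, with entrywise operations and conjugate-transpose as star operation), and define φ : A → ℂ by φ(x) = Σ_{i=1}^p α_i · Tr(x_i)/n_i. Then for every ε with 0 < ε < 1 there exists N ∈ ℕ such that for every integer k ≥ N there exists an injective (not necessarily unital) star-algebra homomorphism σ : A → M_k(ℂ) such that: (i) |Tr(σ(x))/k − φ(x)| ≤ ε · max_{1 ≤ i ≤ p} ‖x_i‖ for all x ∈ A, where ‖·‖ is the operator norm; and (ii) the commutant {y ∈ M_k(ℂ) : y·σ(x) = σ(x)·y for all x ∈ A} has complex dimension at most k² · Σ_{i=1}^p α_i² / n_i². -/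
/-!
Represent `A = ∏ᵢ M_{n i}(ℂ)` on `ℂ^k` by repeating the block `M_{n i}` `m i` times and padding
with a zero block of size `r = k - ∑ᵢ n i * m i`. The normalized trace of this representation is
`∑ᵢ (m i / k) Tr(x i)`, and its commutant consists of the matrices `(⊕ᵢ 1_{n i} ⊗ y i) ⊕ z`, so it
has dimension `∑ᵢ (m i)² + r²`. With `m i = ⌊α i k / n i - 1⌋` each `m i / k` is within `2 / k` of
`α i / n i`, while `r ≤ 2 ∑ᵢ n i`; the deficit `m i ≤ α i k / n i - 1` saves a term of order `k`
in `∑ᵢ (m i)²`, which for large `k` pays for `r² = O(1)`.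
-/

open scoped Matrix.Norms.L2Operator
open Matrix Function Filter

namespace Matrix

section SumSingle

variable {K M α : Type*} [Fintype K] [DecidableEq K] [Fintype M] [NonAssocSemiring α]
  {f g : M → K}

lemma mul_sum_single_apply (hg : Injective g) (w : Matrix K K α) (c : α) (u : K) (b : M) :
    (w * ∑ a, single (f a) (g a) c) u (g b) = w u (f b) * c := by
  rw [Finset.mul_sum, sum_apply, Finset.sum_eq_single b (fun a _ hab => ?_) (by simp),
    mul_single_apply_same]
  exact mul_single_apply_of_ne (hbj := hg.ne (Ne.symm hab)) ..

lemma mul_sum_single_apply_of_notMem (w : Matrix K K α) (c : α) (u : K) {v : K}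
    (hv : v ∉ Set.range g) : (w * ∑ a, single (f a) (g a) c) u v = 0 := by
  rw [Finset.mul_sum, sum_apply]
  exact Finset.sum_eq_zero fun a _ => mul_single_apply_of_ne (hbj := fun h => hv ⟨a, h.symm⟩) ..

lemma sum_single_mul_apply (hf : Injective f) (w : Matrix K K α) (c : α) (a : M) (v : K) :
    ((∑ a, single (f a) (g a) c) * w) (f a) v = c * w (g a) v := by
  rw [Finset.sum_mul, sum_apply, Finset.sum_eq_single a (fun b _ hba => ?_) (by simp),
    single_mul_apply_same]
  exact single_mul_apply_of_ne (h := hf.ne (Ne.symm hba)) ..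

lemma sum_single_mul_apply_of_notMem (w : Matrix K K α) (c : α) {u : K}
    (hu : u ∉ Set.range f) (v : K) : ((∑ a, single (f a) (g a) c) * w) u v = 0 := by
  rw [Finset.sum_mul, sum_apply]
  exact Finset.sum_eq_zero fun a _ => single_mul_apply_of_ne (h := fun h => hu ⟨a, h.symm⟩) ..

variable {w : Matrix K K α} (hw : Commute w (∑ a, single (f a) (g a) 1))
include hw

lemma apply_eq_apply_of_commute_sum_single (hf : Injective f) (hg : Injective g) (a b : M) :
    w (f a) (f b) = w (g a) (g b) := by
  simpa [mul_sum_single_apply hg, sum_single_mul_apply hf] using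
    congrFun (congrFun hw.eq (f a)) (g b)

lemma apply_eq_zero_of_commute_sum_single_left (hg : Injective g) {u : K}
    (hu : u ∉ Set.range f) (b : M) : w u (f b) = 0 := by
  simpa [mul_sum_single_apply hg, sum_single_mul_apply_of_notMem _ _ hu] using
    congrFun (congrFun hw.eq u) (g b)

lemma apply_eq_zero_of_commute_sum_single_right (hf : Injective f) {v : K}
    (hv : v ∉ Set.range g) (a : M) : w (g a) v = 0 := by
  simpa [mul_sum_single_apply_of_notMem _ _ _ hv, sum_single_mul_apply hf] using
    (congrFun (congrFun hw.eq (f a)) v).symm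

end SumSingle

section BlockAmpliation

variable {𝕜 : Type*} [CommSemiring 𝕜] [StarRing 𝕜]
  {ι : Type*} [Fintype ι] [DecidableEq ι] {n m : ι → Type*} [∀ i, Fintype (n i)]
  [∀ i, Fintype (m i)] [∀ i, DecidableEq (m i)] {r : Type*} [Fintype r]

variable (𝕜 n m r) in
/-- `x ↦ (⊕ᵢ x i ⊗ 1_{m i}) ⊕ 0_r`. -/
def blockAmpliation : (∀ i, Matrix (n i) (n i) 𝕜) →⋆ₙₐ[𝕜]
    Matrix ((Σ i, n i × m i) ⊕ r) ((Σ i, n i × m i) ⊕ r) 𝕜 where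
  toFun x := fromBlocks (blockDiagonal' fun i => blockDiagonal fun _ : m i => x i) 0 0 0
  map_smul' c x := by
    simp [fromBlocks_smul, ← blockDiagonal_smul, ← blockDiagonal'_smul, Pi.smul_def]
  map_zero' := by simp [← Pi.zero_def]
  map_add' x y := by
    simp [fromBlocks_add, ← blockDiagonal_add, ← blockDiagonal'_add, Pi.add_def]
  map_mul' x y := by
    simp [fromBlocks_multiply, ← blockDiagonal'_mul, ← blockDiagonal_mul]
  map_star' x := by
    simp [star_eq_conjTranspose, fromBlocks_conjTranspose, blockDiagonal'_conjTranspose,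
      blockDiagonal_conjTranspose]

lemma blockAmpliation_apply (x : ∀ i, Matrix (n i) (n i) 𝕜) :
    blockAmpliation 𝕜 n m r x =
      fromBlocks (blockDiagonal' fun i => blockDiagonal fun _ : m i => x i) 0 0 0 :=
  rfl

lemma blockAmpliation_apply_inl_inl (x : ∀ i, Matrix (n i) (n i) 𝕜) (i : ι) (s t : n i)
    (a : m i) :
    blockAmpliation 𝕜 n m r x (Sum.inl ⟨i, (s, a)⟩) (Sum.inl ⟨i, (t, a)⟩) = x i s t := by
  simp [blockAmpliation_apply, blockDiagonal'_apply_eq, blockDiagonal_apply]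

lemma injective_blockAmpliation [∀ i, Nonempty (m i)] :
    Injective (blockAmpliation 𝕜 n m r) := by
  intro x y hxy
  funext i s t
  have a : m i := Classical.arbitrary _
  simpa [blockAmpliation_apply_inl_inl] using
    congrFun (congrFun hxy (Sum.inl ⟨i, (s, a)⟩)) (Sum.inl ⟨i, (t, a)⟩)

lemma trace_blockAmpliation (x : ∀ i, Matrix (n i) (n i) 𝕜) :
    trace (blockAmpliation 𝕜 n m r x) = ∑ i, Fintype.card (m i) • trace (x i) := by
  have : trace (blockAmpliation 𝕜 n m r x) =
      trace (blockDiagonal' fun i => blockDiagonal fun _ : m i => x i) := by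
    simp [blockAmpliation_apply, trace, Fintype.sum_sum_type]
  simp [this, trace_blockDiagonal', trace_blockDiagonal]

variable [∀ i, DecidableEq (n i)] [DecidableEq r]

lemma blockAmpliation_single (i : ι) (s t : n i) (c : 𝕜) :
    blockAmpliation 𝕜 n m r (Pi.single i (single s t c)) =
      ∑ a : m i, single (Sum.inl ⟨i, (s, a)⟩) (Sum.inl ⟨i, (t, a)⟩) c := by
  ext (⟨j, s', a'⟩ | u) (⟨j', t', b'⟩ | v)
  · rw [blockAmpliation_apply, fromBlocks_apply₁₁, sum_apply]
    obtain rfl | hj := eq_or_ne j j'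
    · rw [blockDiagonal'_apply_eq, blockDiagonal_apply]
      obtain rfl | hji := eq_or_ne j i
      · simp only [Pi.single_eq_same, single_apply, eq_comm, ite_and, Sum.inl.injEq,
          Sigma.mk.injEq, heq_eq_eq, Prod.mk.injEq, true_and, Finset.sum_ite_irrel,
          Finset.sum_ite_eq, Finset.mem_univ, ↓reduceIte, Finset.sum_const_zero]
        split_ifs <;> rfl
      · simp [hji, Ne.symm hji]
    · rw [blockDiagonal'_apply_ne _ _ _ hj]
      refine (Finset.sum_eq_zero fun a _ => if_neg ?_).symm
      rintro ⟨h₁, h₂⟩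
      simp only [Sum.inl.injEq, Sigma.mk.inj_iff] at h₁ h₂
      exact hj (h₁.1.symm.trans h₂.1)
  all_goals simp [blockAmpliation_apply, sum_apply]

/-- Commuting with the images of the matrix units forces `w` to vanish off the diagonal blocks
and to repeat the same `m i × m i` block along the copies of `n i`. -/
lemma eq_zero_of_forall_commute_blockAmpliation
    {w : Matrix ((Σ i, n i × m i) ⊕ r) ((Σ i, n i × m i) ⊕ r) 𝕜}
    (hw : ∀ x, Commute w (blockAmpliation 𝕜 n m r x)) (s₀ : ∀ i, n i)
    (h₁ : ∀ i a b, w (Sum.inl ⟨i, (s₀ i, a)⟩) (Sum.inl ⟨i, (s₀ i, b)⟩) = 0)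
    (h₂ : ∀ u v, w (Sum.inr u) (Sum.inr v) = 0) : w = 0 := by
  let e : ∀ i, n i → m i → (Σ i, n i × m i) ⊕ r := fun i s a => Sum.inl ⟨i, (s, a)⟩
  have he : ∀ i s, Injective (e i s) := fun i s a b h => by simpa [e] using h
  have hcomm : ∀ i s t, Commute w (∑ a, single (e i s a) (e i t a) 1) := fun i s t => by
    simpa [blockAmpliation_single] using hw (Pi.single i (single s t 1))
  ext u (⟨j, t, b⟩ | v)
  · by_cases hu : u ∈ Set.range (e j t)
    · obtain ⟨a, rfl⟩ := hu
      rw [← apply_eq_apply_of_commute_sum_single (hcomm j (s₀ j) t) (he _ _) (he _ _)]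
      exact h₁ j a b
    · exact apply_eq_zero_of_commute_sum_single_left (hcomm j t t) (he _ _) hu b
  · obtain ⟨i, s, a⟩ | u := u
    · exact apply_eq_zero_of_commute_sum_single_right (hcomm i s s) (he _ _) (by simp [e]) a
    · exact h₂ u v

end BlockAmpliation

theorem finrank_centralizer_range_blockAmpliation_le {𝕜 : Type*} [Field 𝕜] [StarRing 𝕜]
    {ι : Type*} [Fintype ι] [DecidableEq ι] {n m : ι → Type*} [∀ i, Fintype (n i)]
    [∀ i, DecidableEq (n i)] [∀ i, Nonempty (n i)] [∀ i, Fintype (m i)] [∀ i, DecidableEq (m i)]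
    {r : Type*} [Fintype r] [DecidableEq r] :
    Module.finrank 𝕜 (Subalgebra.centralizer 𝕜 (Set.range (blockAmpliation 𝕜 n m r))) ≤
      ∑ i, Fintype.card (m i) ^ 2 + Fintype.card r ^ 2 := by
  let s₀ : ∀ i, n i := fun _ => Classical.arbitrary _
  let compress : Matrix ((Σ i, n i × m i) ⊕ r) ((Σ i, n i × m i) ⊕ r) 𝕜 →ₗ[𝕜]
      (∀ i, Matrix (m i) (m i) 𝕜) × Matrix r r 𝕜 :=
    { toFun w := (fun i => of fun a b => w (Sum.inl ⟨i, (s₀ i, a)⟩) (Sum.inl ⟨i, (s₀ i, b)⟩),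
        of fun u v => w (Sum.inr u) (Sum.inr v))
      map_add' _ _ := rfl
      map_smul' _ _ := rfl }
  have hinj : Injective (compress ∘ₗ
      (Subalgebra.centralizer 𝕜 (Set.range (blockAmpliation 𝕜 n m r))).val.toLinearMap) := by
    refine (injective_iff_map_eq_zero _).mpr fun w hw => Subtype.ext ?_
    refine eq_zero_of_forall_commute_blockAmpliation (fun x => ?_) s₀
      (fun i a b => congrFun (congrFun (congrFun (congrArg Prod.fst hw) i) a) b)
      (fun u v => congrFun (congrFun (congrArg Prod.snd hw) u) v)
    exact ((Subalgebra.mem_centralizer_iff 𝕜).mp w.2 _ ⟨x, rfl⟩).symm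
  refine (LinearMap.finrank_le_finrank_of_injective hinj).trans_eq ?_
  simp [Module.finrank_prod, Module.finrank_pi_fintype, Module.finrank_matrix, sq]

end Matrix

lemma Subalgebra.centralizer_image_algEquiv {R A B : Type*} [CommSemiring R] [Semiring A]
    [Semiring B] [Algebra R A] [Algebra R B] (φ : A ≃ₐ[R] B) (S : Set A) :
    centralizer R (φ '' S) = (centralizer R S).map (φ : A →ₐ[R] B) := by
  ext z
  simp only [mem_map, mem_centralizer_iff, Set.forall_mem_image]
  refine ⟨fun hz => ⟨φ.symm z, fun g hg => φ.injective ?_, φ.apply_symm_apply z⟩, ?_⟩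
  · simpa using hz hg
  · rintro ⟨y, hy, rfl⟩ g hg
    simp [← map_mul, hy g hg]

lemma Subalgebra.finrank_centralizer_image_algEquiv {R A B : Type*} [CommRing R] [Ring A]
    [Ring B] [Algebra R A] [Algebra R B] (φ : A ≃ₐ[R] B) (S : Set A) :
    Module.finrank R (centralizer R (φ '' S)) = Module.finrank R (centralizer R S) := by
  rw [centralizer_image_algEquiv]
  exact (φ.subalgebraMap _).toLinearEquiv.finrank_eq.symm

theorem exists_injective_nonUnitalStarAlgHom_fin {𝕜 : Type*} [Field 𝕜] [StarRing 𝕜]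
    {ι : Type*} [Fintype ι] [DecidableEq ι] (n m : ι → ℕ) (hn : ∀ i, 0 < n i)
    (hm : ∀ i, 0 < m i) {r k : ℕ} (hk : ∑ i, n i * m i + r = k) :
    ∃ σ : (∀ i, Matrix (Fin (n i)) (Fin (n i)) 𝕜) →⋆ₙₐ[𝕜] Matrix (Fin k) (Fin k) 𝕜,
      Injective σ ∧ (∀ x, trace (σ x) = ∑ i, m i • trace (x i)) ∧
      Module.finrank 𝕜 (Subalgebra.centralizer 𝕜 (Set.range σ)) ≤ ∑ i, m i ^ 2 + r ^ 2 := by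
  have : ∀ i, Nonempty (Fin (n i)) := fun i => Fin.pos_iff_nonempty.mp (hn i)
  have : ∀ i, Nonempty (Fin (m i)) := fun i => Fin.pos_iff_nonempty.mp (hm i)
  let e : (Σ i, Fin (n i) × Fin (m i)) ⊕ Fin r ≃ Fin k :=
    Fintype.equivFinOfCardEq (by simp [Fintype.card_sigma, ← hk])
  let φ := reindexAlgEquiv 𝕜 𝕜 e
  let σ := blockAmpliation 𝕜 (fun i => Fin (n i)) (fun i => Fin (m i)) (Fin r)
  let ψ : Matrix ((Σ i, Fin (n i) × Fin (m i)) ⊕ Fin r)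
      ((Σ i, Fin (n i) × Fin (m i)) ⊕ Fin r) 𝕜 →⋆ₙₐ[𝕜] Matrix (Fin k) (Fin k) 𝕜 :=
    StarAlgEquiv.ofAlgEquiv φ fun M => (conjTranspose_reindex e e M).symm
  refine ⟨ψ.comp σ, φ.injective.comp injective_blockAmpliation, fun x => ?_, ?_⟩
  · simp [ψ, φ, σ, trace_blockAmpliation]
  · calc Module.finrank 𝕜 (Subalgebra.centralizer 𝕜 (Set.range (ψ.comp σ)))
        = Module.finrank 𝕜 (Subalgebra.centralizer 𝕜 (φ '' Set.range σ)) := by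
          rw [← Set.range_comp]; rfl
      _ ≤ ∑ i, m i ^ 2 + r ^ 2 := by
          simpa [Subalgebra.finrank_centralizer_image_algEquiv] using
            finrank_centralizer_range_blockAmpliation_le (𝕜 := 𝕜) (n := fun i => Fin (n i))
              (m := fun i => Fin (m i)) (r := Fin r)

namespace Matrix

variable {𝕜 : Type*} [RCLike 𝕜]

lemma norm_apply_le_l2_opNorm {m n : Type*} [Fintype m] [Fintype n] [DecidableEq n]
    (M : Matrix m n 𝕜) (i : m) (j : n) : ‖M i j‖ ≤ ‖M‖ :=
  calc ‖M i j‖ = ‖(EuclideanSpace.equiv m 𝕜).symm (M *ᵥ EuclideanSpace.single j 1) i‖ := by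
        simp [mulVec_single]
    _ ≤ ‖(EuclideanSpace.equiv m 𝕜).symm (M *ᵥ EuclideanSpace.single j 1)‖ :=
        PiLp.norm_apply_le _ _
    _ ≤ ‖M‖ * ‖EuclideanSpace.single j (1 : 𝕜)‖ := l2_opNorm_mulVec _ _
    _ = ‖M‖ := by simp

lemma norm_trace_le_l2_opNorm {n : Type*} [Fintype n] [DecidableEq n] (M : Matrix n n 𝕜) :
    ‖trace M‖ ≤ Fintype.card n * ‖M‖ :=
  calc ‖trace M‖ ≤ ∑ i, ‖M i i‖ := norm_sum_le _ _
    _ ≤ ∑ _i : n, ‖M‖ := Finset.sum_le_sum fun i _ => norm_apply_le_l2_opNorm M i i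
    _ = Fintype.card n * ‖M‖ := by simp

end Matrix

lemma norm_sum_mul_trace_le {𝕜 : Type*} [RCLike 𝕜] {ι : Type*} [Fintype ι] {n : ι → Type*}
    [∀ i, Fintype (n i)] [∀ i, DecidableEq (n i)] (c : ι → ℝ) (x : ∀ i, Matrix (n i) (n i) 𝕜) :
    ‖∑ i, (c i : 𝕜) * trace (x i)‖ ≤ (∑ i, |c i| * Fintype.card (n i)) * ⨆ i, ‖x i‖ := by
  rw [Finset.sum_mul]
  refine (norm_sum_le _ _).trans (Finset.sum_le_sum fun i _ => ?_)
  rw [norm_mul, RCLike.norm_ofReal, mul_assoc]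
  gcongr
  refine (norm_trace_le_l2_opNorm (x i)).trans ?_
  gcongr
  exact le_ciSup (f := fun i => ‖x i‖) (Finite.bddAbove_range _) i

lemma sum_sq_add_sq_le_sum_sq {ι : Type*} [Fintype ι] {x m : ι → ℝ} {r R : ℝ}
    (hm₀ : ∀ i, 0 ≤ m i) (hm : ∀ i, m i ≤ x i - 1) (hr₀ : 0 ≤ r) (hr : r ≤ R)
    (hR : Fintype.card ι + R ^ 2 ≤ 2 * ∑ i, x i) :
    ∑ i, m i ^ 2 + r ^ 2 ≤ ∑ i, x i ^ 2 := by
  have hsq : ∑ i, m i ^ 2 ≤ ∑ i, (x i ^ 2 - 2 * x i + 1) :=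
    Finset.sum_le_sum fun i _ => by nlinarith [hm₀ i, hm i]
  simp only [Finset.sum_add_distrib, Finset.sum_sub_distrib, ← Finset.mul_sum,
    Finset.sum_const, Finset.card_univ, nsmul_eq_mul, mul_one] at hsq
  nlinarith

lemma sum_abs_div_sub_div_mul_le {ι : Type*} [Fintype ι] {n : ι → ℕ} {α m : ι → ℝ} {k : ℕ}
    (hk : 0 < k) (hm : ∀ i, |m i - α i * k / n i| ≤ 2) :
    ∑ i, |m i / k - α i / n i| * n i ≤ 2 * (∑ i, (n i : ℝ)) / k := by
  rw [Finset.mul_sum, Finset.sum_div]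
  refine Finset.sum_le_sum fun i _ => ?_
  have hk' : (0 : ℝ) < k := Nat.cast_pos.mpr hk
  have hdiff : m i / k - α i / n i = (m i - α i * k / n i) / k := by field_simp
  rw [hdiff, abs_div, abs_of_pos hk', div_mul_eq_mul_div, div_le_div_iff_of_pos_right hk']
  gcongr
  exact hm i

lemma exists_multiplicities {ι : Type*} [Fintype ι] {n : ι → ℕ} {α : ι → ℝ} {ε : ℝ} {k : ℕ}
    (hn : ∀ i, 0 < n i) (hsum : ∑ i, α i = 1) (hk : 0 < k)
    (h₁ : ∀ i, 2 * (n i : ℝ) ≤ α i * k) (h₂ : 2 * ∑ i, (n i : ℝ) ≤ ε * k)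
    (h₃ : Fintype.card ι + (2 * ∑ i, (n i : ℝ)) ^ 2 ≤ 2 * ∑ i, α i / n i * k) :
    ∃ m : ι → ℕ, (∀ i, 0 < m i) ∧ ∑ i, n i * m i ≤ k ∧
      ∑ i, |(m i : ℝ) / k - α i / n i| * n i ≤ ε ∧
      ((∑ i, m i ^ 2 + (k - ∑ i, n i * m i) ^ 2 : ℕ) : ℝ) ≤ k ^ 2 * ∑ i, α i ^ 2 / n i ^ 2 := by
  set S := ∑ i, (n i : ℝ)
  have hn' : ∀ i, (0 : ℝ) < n i := fun i => Nat.cast_pos.mpr (hn i)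
  set x : ι → ℝ := fun i => α i * k / n i
  have hx : ∀ i, 2 ≤ x i := fun i => (le_div_iff₀ (hn' i)).mpr (by linarith [h₁ i])
  refine ⟨fun i => ⌊x i - 1⌋₊, fun i => Nat.floor_pos.mpr (by linarith [hx i]), ?_⟩
  set m := fun i => ⌊x i - 1⌋₊
  have hm_le : ∀ i, (m i : ℝ) ≤ x i - 1 := fun i => Nat.floor_le (by linarith [hx i])
  have hm_gt : ∀ i, x i - 2 < m i := fun i => by linarith [Nat.lt_floor_add_one (x i - 1)]
  have hnx : ∑ i, n i * x i = k := by
    simp [x, mul_div_cancel₀ _ (hn' _).ne', ← Finset.sum_mul, hsum]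
  have hcount : ∑ i, (n i * m i : ℝ) ≤ k - S :=
    calc ∑ i, (n i * m i : ℝ) ≤ ∑ i, n i * (x i - 1) :=
          Finset.sum_le_sum fun i _ => mul_le_mul_of_nonneg_left (hm_le i) (hn' i).le
      _ = k - S := by simp [mul_sub, Finset.sum_sub_distrib, hnx, S]
  have hcount' : k - 2 * S ≤ ∑ i, (n i * m i : ℝ) :=
    calc (k : ℝ) - 2 * S = ∑ i, n i * (x i - 2) := by
          simp [mul_sub, Finset.sum_sub_distrib, hnx, S, Finset.mul_sum, mul_comm]
      _ ≤ ∑ i, (n i * m i : ℝ) :=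
          Finset.sum_le_sum fun i _ => mul_le_mul_of_nonneg_left (hm_gt i).le (hn' i).le
  have hS : 0 ≤ S := Finset.sum_nonneg fun i _ => (hn' i).le
  have hle : ∑ i, n i * m i ≤ k := by
    exact_mod_cast (by push_cast; linarith : ((∑ i, n i * m i : ℕ) : ℝ) ≤ k)
  refine ⟨hle, ?_, ?_⟩
  · refine (sum_abs_div_sub_div_mul_le hk fun i => ?_).trans
      ((div_le_iff₀ (Nat.cast_pos.mpr hk)).mpr h₂)
    exact abs_le.mpr ⟨by linarith [hm_gt i], by linarith [hm_le i]⟩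
  · have hx2 : ∑ i, x i ^ 2 = k ^ 2 * ∑ i, α i ^ 2 / n i ^ 2 := by
      rw [Finset.mul_sum]
      exact Finset.sum_congr rfl fun i _ => by ring
    have hx1 : ∑ i, x i = ∑ i, α i / n i * k := Finset.sum_congr rfl fun i _ => by ring
    push_cast [Nat.cast_sub hle]
    rw [← hx2]
    exact sum_sq_add_sq_le_sum_sq (fun i => Nat.cast_nonneg _) hm_le (by linarith) (by linarith)
      (hx1 ▸ h₃)

lemma eventually_exists_multiplicities {ι : Type*} [Fintype ι] {n : ι → ℕ} {α : ι → ℝ} {ε : ℝ}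
    (hn : ∀ i, 0 < n i) (hα : ∀ i, 0 < α i) (hsum : ∑ i, α i = 1) (hε : 0 < ε) :
    ∀ᶠ k in atTop, ∃ m : ι → ℕ, (∀ i, 0 < m i) ∧ ∑ i, n i * m i ≤ k ∧
      ∑ i, |(m i : ℝ) / k - α i / n i| * n i ≤ ε ∧
      ((∑ i, m i ^ 2 + (k - ∑ i, n i * m i) ^ 2 : ℕ) : ℝ) ≤ k ^ 2 * ∑ i, α i ^ 2 / n i ^ 2 := by
  have hlarge {b : ℝ} (hb : 0 < b) (a : ℝ) : ∀ᶠ k : ℕ in atTop, a ≤ b * k :=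
    (tendsto_natCast_atTop_atTop.const_mul_atTop hb).eventually_ge_atTop a
  have hc : 0 < ∑ i, α i / n i :=
    Finset.sum_pos (fun i _ => div_pos (hα i) (Nat.cast_pos.mpr (hn i)))
      (Finset.nonempty_of_sum_ne_zero (hsum ▸ one_ne_zero))
  filter_upwards [eventually_gt_atTop 0, eventually_all.mpr fun i => hlarge (hα i) (2 * n i),
    hlarge hε (2 * ∑ i, (n i : ℝ)),
    hlarge (mul_pos two_pos hc) (Fintype.card ι + (2 * ∑ i, (n i : ℝ)) ^ 2)]
    with k hk h₁ h₂ h₃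
  exact exists_multiplicities hn hsum hk h₁ h₂ (by rw [← Finset.sum_mul]; linarith)

theorem stmt3_general (p : ℕ) (n : Fin p → ℕ) (hn : ∀ i, 0 < n i)
    (α : Fin p → ℝ) (hα : ∀ i, 0 < α i) (hsum : ∑ i, α i = 1)
    (ε : ℝ) (hε : 0 < ε) :
    ∃ N : ℕ, ∀ k : ℕ, N ≤ k →
      ∃ σ : (∀ i : Fin p, Matrix (Fin (n i)) (Fin (n i)) ℂ) →⋆ₙₐ[ℂ]
              Matrix (Fin k) (Fin k) ℂ,
        Function.Injective σ ∧
        (∀ x : ∀ i : Fin p, Matrix (Fin (n i)) (Fin (n i)) ℂ,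
          ‖Matrix.trace (σ x) / (k : ℂ) -
              ∑ i, (α i : ℂ) * Matrix.trace (x i) / (n i : ℂ)‖ ≤
            ε * ⨆ i, ‖x i‖) ∧
        ((Module.finrank ℂ
            (Subalgebra.centralizer ℂ (Set.range ⇑σ) :
              Subalgebra ℂ (Matrix (Fin k) (Fin k) ℂ)) : ℝ) ≤
          (k : ℝ) ^ 2 * ∑ i, (α i) ^ 2 / (n i : ℝ) ^ 2) := by
  obtain ⟨N, hN⟩ := eventually_atTop.mp (eventually_exists_multiplicities hn hα hsum hε)
  refine ⟨N, fun k hk => ?_⟩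
  obtain ⟨m, hm, hmk, htr, hdim⟩ := hN k hk
  obtain ⟨σ, hσ, hσtr, hσdim⟩ :=
    exists_injective_nonUnitalStarAlgHom_fin (𝕜 := ℂ) n m hn hm (Nat.add_sub_cancel' hmk)
  refine ⟨σ, hσ, fun x => ?_, (Nat.cast_le.mpr hσdim).trans hdim⟩
  have hcoeff : trace (σ x) / k - ∑ i, (α i : ℂ) * trace (x i) / n i =
      ∑ i, (((m i : ℝ) / k - α i / n i : ℝ) : ℂ) * trace (x i) := by
    rw [hσtr, Finset.sum_div, ← Finset.sum_sub_distrib]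
    push_cast
    exact Finset.sum_congr rfl fun i _ => by ring
  rw [hcoeff]
  refine (norm_sum_mul_trace_le (fun i => (m i : ℝ) / k - α i / n i) x).trans
    (mul_le_mul_of_nonneg_right ?_ (Real.iSup_nonneg fun i => norm_nonneg _))
  simpa using htr

/-- Lemma 5.3 of the paper, stated algebraically: for `A = ⊕_i M_{n_i}(ℂ)` with trace
`φ = ⊕_i α_i tr_{n_i}`, for every `0 < ε < 1` and all sufficiently large `k` there is an
injective star-algebra embedding `σ : A → M_k(ℂ)` whose normalized trace is `ε`-close to
`φ` (in norm) and whose commutant has dimension at most `k² · ∑ α_i²/n_i²`. -/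
theorem stmt3 (p : ℕ) (hp : 1 ≤ p) (n : Fin p → ℕ) (hn : ∀ i, 0 < n i)
    (α : Fin p → ℝ) (hα : ∀ i, 0 < α i) (hsum : ∑ i, α i = 1)
    (ε : ℝ) (hε : 0 < ε) (hε1 : ε < 1) :
    ∃ N : ℕ, ∀ k : ℕ, N ≤ k →
      ∃ σ : (∀ i : Fin p, Matrix (Fin (n i)) (Fin (n i)) ℂ) →⋆ₙₐ[ℂ]
              Matrix (Fin k) (Fin k) ℂ,
        Function.Injective σ ∧
        (∀ x : ∀ i : Fin p, Matrix (Fin (n i)) (Fin (n i)) ℂ,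
          ‖Matrix.trace (σ x) / (k : ℂ) -
              ∑ i, (α i : ℂ) * Matrix.trace (x i) / (n i : ℂ)‖ ≤
            ε * ⨆ i, ‖x i‖) ∧
        ((Module.finrank ℂ
            (Subalgebra.centralizer ℂ (Set.range ⇑σ) :
              Subalgebra ℂ (Matrix (Fin k) (Fin k) ℂ)) : ℝ) ≤
          (k : ℝ) ^ 2 * ∑ i, (α i) ^ 2 / (n i : ℝ) ^ 2) :=
  stmt3_general p n hn α hα hsum ε hε
end

section
/- Let p ≥ 1, let ε₀ > 0, let τ > 0, and let a, a' ∈ ℝ^p satisfy Σ_{i=1}^p (a_i − a'_i)² < (ε₀ τ)² · p. Define W = {(i,j) : 1 ≤ i < j ≤ p, |a_i − a_j| < ε₀} and W' = {(i,j) : 1 ≤ i < j ≤ p, |a'_i − a'_j| < ε₀/2}. Then the cardinality of W' \ W is strictly less than 16 τ² p². -/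
/-- The combinatorial perturbation estimate in the proof of Lemma 6.4 of the paper:
if the vectors `a, a' ∈ ℝ^p` satisfy `∑ (a i − a' i)² < (ε₀τ)²·p`, then the number of
pairs `i < j` with `|a' i − a' j| < ε₀/2` but not `|a i − a j| < ε₀` is less than
`16τ²p²`. -/
theorem stmt8 (p : ℕ) (hp : 1 ≤ p) (ε₀ τ : ℝ) (hε₀ : 0 < ε₀) (hτ : 0 < τ)
    (a a' : Fin p → ℝ)
    (hclose : ∑ i, (a i - a' i) ^ 2 < (ε₀ * τ) ^ 2 * p) :
    ((({q : Fin p × Fin p | q.1 < q.2 ∧ |a' q.1 - a' q.2| < ε₀ / 2} \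
        {q : Fin p × Fin p | q.1 < q.2 ∧ |a q.1 - a q.2| < ε₀}).ncard : ℝ)) <
      16 * τ ^ 2 * p ^ 2 := by
  classical
  set B : Finset (Fin p) := Finset.univ.filter (fun i => ε₀ / 4 ≤ |a i - a' i|) with hB
  set Sf : Finset (Fin p × Fin p) := Finset.univ.filter
    (fun q => q.1 < q.2 ∧ |a' q.1 - a' q.2| < ε₀ / 2 ∧ ¬ |a q.1 - a q.2| < ε₀) with hSf
  have hset : ({q : Fin p × Fin p | q.1 < q.2 ∧ |a' q.1 - a' q.2| < ε₀ / 2} \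
        {q : Fin p × Fin p | q.1 < q.2 ∧ |a q.1 - a q.2| < ε₀}) = ↑Sf := by
    ext q
    simp [hSf, Set.mem_diff]
    tauto
  rw [hset, Set.ncard_coe_finset]
  -- card bound on B
  have hBsum : (B.card : ℝ) * (ε₀ / 4) ^ 2 ≤ ∑ i, (a i - a' i) ^ 2 := by
    calc (B.card : ℝ) * (ε₀ / 4) ^ 2 = ∑ _i ∈ B, (ε₀ / 4) ^ 2 := by
          rw [Finset.sum_const, nsmul_eq_mul]
      _ ≤ ∑ i ∈ B, (a i - a' i) ^ 2 := by
          apply Finset.sum_le_sum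
          intro i hi
          have hi' : ε₀ / 4 ≤ |a i - a' i| := (Finset.mem_filter.mp hi).2
          nlinarith [sq_abs (a i - a' i), abs_nonneg (a i - a' i)]
      _ ≤ ∑ i, (a i - a' i) ^ 2 := by
          apply Finset.sum_le_sum_of_subset_of_nonneg (Finset.filter_subset _ _)
          intro i _ _; positivity
  have hBcard : (B.card : ℝ) < 16 * τ ^ 2 * p := by
    have h16 : (16 : ℝ) * τ ^ 2 * p * (ε₀ / 4) ^ 2 = (ε₀ * τ) ^ 2 * p := by ring
    have hpos : (0:ℝ) < (ε₀ / 4) ^ 2 := by positivity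
    nlinarith [hBsum, hclose]
  -- injection Sf → B ×ˢ univ
  have hmemB : ∀ q ∈ Sf, q.1 ∈ B ∨ q.2 ∈ B := by
    intro q hq
    obtain ⟨_, h2, h3⟩ := (Finset.mem_filter.mp hq).2
    push_neg at h3
    by_contra h
    push_neg at h
    obtain ⟨h1B, h2B⟩ := h
    simp only [hB, Finset.mem_filter, Finset.mem_univ, true_and, not_le] at h1B h2B
    have := abs_sub_abs_le_abs_sub (a q.1 - a q.2) (a' q.1 - a' q.2)
    have htri : |a q.1 - a q.2| ≤ |a q.1 - a' q.1| + |a' q.1 - a' q.2| + |a' q.2 - a q.2| := by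
      have := abs_sub_le (a q.1) (a' q.1) (a q.2)
      have := abs_sub_le (a' q.1) (a' q.2) (a q.2)
      linarith
    rw [abs_sub_comm (a' q.2)] at htri
    linarith
  have hcard : Sf.card ≤ (B ×ˢ (Finset.univ : Finset (Fin p))).card := by
    refine Finset.card_le_card_of_injOn
      (fun q : Fin p × Fin p => if q.1 ∈ B then q else (q.2, q.1)) ?_ ?_
    · intro q hq
      rcases hmemB q hq with h | h
      · simp [h, Finset.mem_product]
      · by_cases h1 : q.1 ∈ B <;> simp [h1, h, Finset.mem_product]
    · intro q hq q' hq' heq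
      have hlt : q.1 < q.2 := (Finset.mem_filter.mp hq).2.1
      have hlt' : q'.1 < q'.2 := (Finset.mem_filter.mp hq').2.1
      by_cases h1 : q.1 ∈ B <;> by_cases h1' : q'.1 ∈ B <;>
        simp [h1, h1', Prod.ext_iff] at heq
      · exact Prod.ext heq.1 heq.2
      · exfalso; rw [heq.1, heq.2] at hlt; exact absurd (hlt.trans hlt') (lt_irrefl _)
      · exfalso; rw [← heq.1, ← heq.2] at hlt'; exact absurd (hlt.trans hlt') (lt_irrefl _)
      · exact Prod.ext heq.2 heq.1
  have hcard2 : (Sf.card : ℝ) ≤ (B.card : ℝ) * p := by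
    have : (B ×ˢ (Finset.univ : Finset (Fin p))).card = B.card * p := by
      rw [Finset.card_product, Finset.card_univ, Fintype.card_fin]
    calc (Sf.card : ℝ) ≤ ((B ×ˢ Finset.univ).card : ℝ) := by exact_mod_cast hcard
      _ = (B.card : ℝ) * p := by rw [this]; push_cast; ring
  have hp' : (0:ℝ) < p := by exact_mod_cast hp
  calc (Sf.card : ℝ) ≤ (B.card : ℝ) * p := hcard2
    _ < 16 * τ ^ 2 * p * p := by exact mul_lt_mul_of_pos_right hBcard hp'
    _ = 16 * τ ^ 2 * p ^ 2 := by ring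
end
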